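/- arXiv:2511.21559 — 2 statements merged into one kernel-verified Lean document; each statement's English description precedes it below -/
import Mathlib

section
/- Star decomposition of free monoids: for a finite nonempty alphabet A, every word w ∈ A* satisfies at least one of: (1) w ∈ B*·C* for some proper subsets B ⊊ A, C ⊊ A; (2) w ∈ B*·a·C* for some letter a ∈ A and subsets B, C ⊆ A∖{a}; or (3) every letter of A occurs at least twice in w and every first occurrence of a letter in w is strictly to the left of every last occurrence of a letter in w. -/
lemma idx_lt {α : Type*} [DecidableEq α] (s t : List α) (a : α) (h : a ∈ s) :
    (s ++ t).idxOf a < s.length := by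
  induction s with
  | nil => simp at h
  | cons c s ih =>
    by_cases hc : c = a
    · subst hc; simp [List.idxOf_cons_self]
    · rcases List.mem_cons.mp h with rfl | h
      · exact absurd rfl hc
      · simpa [List.idxOf_cons_ne _ hc, Nat.succ_lt_succ_iff] using ih h

lemma idx_eq {α : Type*} [DecidableEq α] (s t : List α) (b : α) (h : b ∉ s) :
    (s ++ b :: t).idxOf b = s.length := by
  induction s with
  | nil => simp
  | cons c s ih =>
    have hc : c ≠ b := fun hcb => h (hcb ▸ List.mem_cons_self)
    simp [List.idxOf_cons_ne _ hc, ih (fun hb => h (List.mem_cons_of_mem _ hb))]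

lemma firstSplit {α : Type*} [DecidableEq α] {w : List α} {a : α} (h : a ∈ w) :
    ∃ u v : List α, w = u ++ a :: v ∧ a ∉ u := by
  induction w with
  | nil => simp at h
  | cons c s ih =>
    by_cases hc : c = a
    · exact ⟨[], s, by simp [hc], by simp⟩
    · rcases List.mem_cons.mp h with rfl | h
      · exact absurd rfl hc
      · obtain ⟨u, v, huv, hu⟩ := ih h
        refine ⟨c :: u, v, by simp [huv], ?_⟩
        simp only [List.mem_cons, not_or]
        exact ⟨fun hh => hc hh.symm, hu⟩

lemma lastSplit {α : Type*} [DecidableEq α] {w : List α} {b : α} (h : b ∈ w) :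
    ∃ u v : List α, w = u ++ b :: v ∧ b ∉ v := by
  obtain ⟨u, v, huv, hu⟩ := firstSplit (w := w.reverse) (a := b) (by simpa using h)
  refine ⟨v.reverse, u.reverse, ?_, by simpa using hu⟩
  have := congrArg List.reverse huv
  simpa using this

/-- Star decomposition of free monoids: every word over a finite nonempty alphabet `A`
either splits as `B* C*` for proper subsets `B, C ⊊ A`, or as `B* a C*` with
`B, C ⊆ A \ {a}`, or every letter of `A` occurs at least twice and every first
occurrence of a letter lies strictly to the left of every last occurrence. -/
theorem stmt11 {α : Type*} [DecidableEq α] (A : Finset α) (hA : A.Nonempty)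
    (w : List α) (hw : ∀ c ∈ w, c ∈ A) :
    (∃ B C : Finset α, B ⊂ A ∧ C ⊂ A ∧
      ∃ u v : List α, w = u ++ v ∧ (∀ c ∈ u, c ∈ B) ∧ (∀ c ∈ v, c ∈ C)) ∨
    (∃ a ∈ A, ∃ B C : Finset α, B ⊆ A.erase a ∧ C ⊆ A.erase a ∧
      ∃ u v : List α, w = u ++ a :: v ∧ (∀ c ∈ u, c ∈ B) ∧ (∀ c ∈ v, c ∈ C)) ∨
    ((∀ a ∈ A, 2 ≤ w.count a) ∧
      ∀ a ∈ A, ∀ b ∈ A, w.idxOf a < w.length - 1 - w.reverse.idxOf b) := by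
  by_cases h1 : ∀ a ∈ A, a ∈ w
  · by_cases h2 : ∀ a ∈ A, 2 ≤ w.count a
    · by_cases h3 : ∀ a ∈ A, ∀ b ∈ A, w.idxOf a < w.length - 1 - w.reverse.idxOf b
      · exact Or.inr (Or.inr ⟨h2, h3⟩)
      · push_neg at h3
        obtain ⟨a, ha, b, hb, hle⟩ := h3
        obtain ⟨u, v, huv, hv⟩ := lastSplit (h1 b hb)
        -- reverse.idxOf b = v.length
        have hrev : w.reverse.idxOf b = v.length := by
          rw [huv]
          simpa using idx_eq v.reverse u.reverse b (by simpa using hv)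
        have hlen : w.length = u.length + 1 + v.length := by
          rw [huv]; simp; omega
        have hul : w.length - 1 - w.reverse.idxOf b = u.length := by
          rw [hrev]; omega
        rw [hul] at hle
        have hanu : a ∉ u := by
          intro hau
          have := idx_lt u (b :: v) a hau
          rw [← huv] at this
          omega
        have hab : a ≠ b := by
          intro hEq
          subst hEq
          have hc := h2 a ha
          rw [huv] at hc
          simp [List.count_append, List.count_cons,
            List.count_eq_zero_of_not_mem hanu, List.count_eq_zero_of_not_mem hv] at hc
        refine Or.inl ⟨A.erase a, A.erase b, Finset.erase_ssubset ha, Finset.erase_ssubset hb,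
          u ++ [b], v, by simp [huv], ?_, ?_⟩
        · intro c hc
          rcases List.mem_append.mp hc with hc | hc
          · exact Finset.mem_erase.mpr ⟨fun h => hanu (h ▸ hc), hw c (huv ▸ List.mem_append_left _ hc)⟩
          · simp at hc
            subst hc
            exact Finset.mem_erase.mpr ⟨fun h => hab h.symm, hb⟩
        · intro c hc
          exact Finset.mem_erase.mpr ⟨fun h => hv (h ▸ hc), hw c (huv ▸ (by simp [hc]))⟩
    · push_neg at h2
      obtain ⟨a, ha, hcnt⟩ := h2
      have haw : a ∈ w := h1 a ha
      have hcnt1 : w.count a = 1 := by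
        have := List.count_pos_iff.mpr haw
        omega
      obtain ⟨u, v, huv, hu⟩ := firstSplit haw
      have hav : a ∉ v := by
        intro hav
        rw [huv] at hcnt1
        simp [List.count_append, List.count_cons,
          List.count_eq_zero_of_not_mem hu] at hcnt1
        exact (List.count_pos_iff.mpr hav).ne' (by omega)
      refine Or.inr (Or.inl ⟨a, ha, A.erase a, A.erase a, le_refl _, le_refl _, u, v, huv, ?_, ?_⟩)
      · intro c hc
        exact Finset.mem_erase.mpr ⟨fun h => hu (h ▸ hc), hw c (huv ▸ List.mem_append_left _ hc)⟩
      · intro c hc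
        exact Finset.mem_erase.mpr ⟨fun h => hav (h ▸ hc), hw c (huv ▸ (by simp [hc]))⟩
  · push_neg at h1
    obtain ⟨a, ha, haw⟩ := h1
    refine Or.inl ⟨A.erase a, A.erase a, Finset.erase_ssubset ha, Finset.erase_ssubset ha,
      w, [], by simp, fun c hc => Finset.mem_erase.mpr ⟨fun h => haw (h ▸ hc), hw c hc⟩, by simp⟩
end

section
/- Non-regularity criterion for deterministic-codeterministic transition systems: let (S, Σ, →) be a labeled transition system such that for every letter a ∈ Σ, the relation →_a is both a partial function (forward determinism) and injective (backward determinism). If between two configurations c_1, c_2 ∈ S infinitely many distinct configurations are visited by runs from c_1 to c_2, then the language { w ∈ Σ* : c_1 →^w c_2 } is not regular. -/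
/-- Runs in a labeled transition system with step relation `step`. -/
inductive LTS.Reach {S A : Type*} (step : S → A → S → Prop) : S → List A → S → Prop
  | nil (s : S) : LTS.Reach step s [] s
  | cons {s s' s'' : S} {a : A} {w : List A}
      (h : step s a s') (h' : LTS.Reach step s' w s'') : LTS.Reach step s (a :: w) s''

namespace LTS

variable {S A : Type*} {step : S → A → S → Prop}

theorem Reach.append {s m t : S} {u v : List A}
    (h1 : Reach step s u m) (h2 : Reach step m v t) : Reach step s (u ++ v) t := by
  induction h1 with
  | nil => simpa using h2
  | cons h _ ih => exact .cons h (ih h2)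

theorem Reach.split {s t : S} {u v : List A}
    (h : Reach step s (u ++ v) t) : ∃ m, Reach step s u m ∧ Reach step m v t := by
  induction u generalizing s with
  | nil => exact ⟨s, .nil s, by simpa using h⟩
  | cons a u ih =>
    cases h with
    | cons hs hr =>
      obtain ⟨m, h1, h2⟩ := ih hr
      exact ⟨m, .cons hs h1, h2⟩

theorem Reach.fwd_det (hfwd : ∀ s a s' s'', step s a s' → step s a s'' → s' = s'')
    {s t t' : S} {w : List A} (h : Reach step s w t) (h' : Reach step s w t') : t = t' := by
  induction h generalizing t' with
  | nil => cases h'; rfl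
  | cons hs _ ih =>
    cases h' with
    | cons hs' hr' => exact ih (by rwa [hfwd _ _ _ _ hs hs'])

theorem Reach.bwd_det (hbwd : ∀ s s' s'' a, step s a s'' → step s' a s'' → s = s')
    {s s' t : S} {w : List A} (h : Reach step s w t) (h' : Reach step s' w t) : s = s' := by
  induction h generalizing s' with
  | nil => cases h'; rfl
  | cons hs _ ih =>
    cases h' with
    | cons hs' hr' => exact hbwd _ _ _ _ hs (by rwa [ih hr'])

end LTS

/-- In a forward- and backward-deterministic labeled transition system, if infinitely
many configurations are visited on runs from `c₁` to `c₂`, then the language of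
transition sequences from `c₁` to `c₂` is not regular. -/
theorem stmt15 {S A : Type*} (step : S → A → S → Prop)
    (hfwd : ∀ s a s' s'', step s a s' → step s a s'' → s' = s'')
    (hbwd : ∀ s s' s'' a, step s a s'' → step s' a s'' → s = s')
    (c₁ c₂ : S)
    (hinf : {d : S | ∃ u v : List A,
        LTS.Reach step c₁ u d ∧ LTS.Reach step d v c₂}.Infinite) :
    ¬ Language.IsRegular ({w : List A | LTS.Reach step c₁ w c₂} : Language A) := by
  rintro ⟨σ, hfin, M, hM⟩
  set D := {d : S | ∃ u v : List A,
      LTS.Reach step c₁ u d ∧ LTS.Reach step d v c₂} with hD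
  have hmem : ∀ w : List A, w ∈ M.accepts ↔ LTS.Reach step c₁ w c₂ := by
    intro w; rw [hM]; rfl
  -- choose witnesses
  choose u v hu hv using fun d : D => d.2
  have hinj : Function.Injective (fun d : D => M.eval (u d)) := by
    intro d d' he
    simp only [DFA.eval] at he
    have h1 : (u d ++ v d) ∈ M.accepts := by
      rw [hmem]; exact (hu d).append (hv d)
    have h2 : (u d' ++ v d) ∈ M.accepts := by
      rw [DFA.mem_accepts] at h1 ⊢
      rw [DFA.eval, DFA.evalFrom_of_append] at h1 ⊢
      rwa [he] at h1
    rw [hmem] at h2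
    obtain ⟨m, hm1, hm2⟩ := h2.split
    have e1 : m = (d' : S) := hm1.fwd_det hfwd (hu d')
    have e2 : m = (d : S) := hm2.bwd_det hbwd (hv d)
    exact Subtype.ext (e2.symm.trans e1)
  have : Infinite D := Set.infinite_coe_iff.mpr hinf
  exact (Finite.of_injective _ hinj).not_infinite this
end
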